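/- Let R_w be an invertible m×m real matrix, R̂ an invertible n×n real matrix, Φ an invertible n×n real matrix, and G an n×m real matrix. Let A be the 2×2-block matrix A = [[R_w, 0], [−R̂ Φ⁻¹ G, R̂ Φ⁻¹]] (block rows/columns of sizes m and n). Then A is invertible, and the (2,2) diagonal block of the matrix A⁻¹ A⁻ᵀ equals Φ (R̂⁻¹ R̂⁻ᵀ) Φᵀ + G (R_w⁻¹ R_w⁻ᵀ) Gᵀ. (That is, the propagated state covariance satisfies P̃ = Φ P̂ Φᵀ + G Q Gᵀ, where P̂ = R̂⁻¹ R̂⁻ᵀ and Q = R_w⁻¹ R_w⁻ᵀ.) -/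
import Mathlib


open Matrix

/-- Propagated state covariance in FMAP time propagation: for
`A = [[R_w, 0], [−R̂ Φ⁻¹ G, R̂ Φ⁻¹]]` with `R_w`, `R̂`, `Φ` invertible, `A` is invertible
and the `(2,2)` block of `A⁻¹ A⁻ᵀ` equals `Φ (R̂⁻¹ R̂⁻ᵀ) Φᵀ + G (R_w⁻¹ R_w⁻ᵀ) Gᵀ`
(i.e. `P̃ = Φ P̂ Φᵀ + G Q Gᵀ`). -/
theorem stmt_12 {m n : ℕ}
    (Rw : Matrix (Fin m) (Fin m) ℝ) (hw : IsUnit Rw.det)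
    (Rhat : Matrix (Fin n) (Fin n) ℝ) (hhat : IsUnit Rhat.det)
    (Φ : Matrix (Fin n) (Fin n) ℝ) (hΦ : IsUnit Φ.det)
    (G : Matrix (Fin n) (Fin m) ℝ)
    (A : Matrix (Fin m ⊕ Fin n) (Fin m ⊕ Fin n) ℝ)
    (hA : A = Matrix.fromBlocks Rw 0 (-(Rhat * Φ⁻¹ * G)) (Rhat * Φ⁻¹)) :
    IsUnit A.det ∧
    (A⁻¹ * (Aᵀ)⁻¹).toBlocks₂₂
      = Φ * (Rhat⁻¹ * (Rhatᵀ)⁻¹) * Φᵀ + G * (Rw⁻¹ * (Rwᵀ)⁻¹) * Gᵀ := by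
  have hΦi : IsUnit (Φ⁻¹).det := Matrix.isUnit_nonsing_inv_det Φ hΦ
  have hD : IsUnit (Rhat * Φ⁻¹).det := by
    rw [Matrix.det_mul]; exact hhat.mul hΦi
  have hAdet : IsUnit A.det := by
    rw [hA, Matrix.det_fromBlocks_zero₁₂]; exact hw.mul hD
  refine ⟨hAdet, ?_⟩
  have hB : A⁻¹ = Matrix.fromBlocks Rw⁻¹ 0 (G * Rw⁻¹) (Φ * Rhat⁻¹) := by
    apply Matrix.inv_eq_right_inv
    rw [hA, Matrix.fromBlocks_multiply]
    have h1 : Rw * Rw⁻¹ = 1 := Matrix.mul_nonsing_inv _ hw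
    have h2 : (Rhat * Φ⁻¹) * (Φ * Rhat⁻¹) = 1 := by
      rw [Matrix.mul_assoc, ← Matrix.mul_assoc Φ⁻¹,
        Matrix.nonsing_inv_mul _ hΦ, Matrix.one_mul,
        Matrix.mul_nonsing_inv _ hhat]
    have h3 : -(Rhat * Φ⁻¹ * G) * Rw⁻¹ + (Rhat * Φ⁻¹) * (G * Rw⁻¹) = 0 := by
      rw [Matrix.neg_mul, Matrix.mul_assoc]
      exact neg_add_cancel _
    simp [h1, h2, h3, Matrix.mul_assoc]
  rw [show (Aᵀ)⁻¹ = (A⁻¹)ᵀ from (Matrix.transpose_nonsing_inv A).symm, hB,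
    Matrix.fromBlocks_transpose, Matrix.fromBlocks_multiply]
  simp only [Matrix.toBlocks₂₂, Matrix.transpose_mul, Matrix.transpose_nonsing_inv,
    Matrix.mul_assoc]
  ext i j
  simp [Matrix.add_apply]
  ring
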